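/- Let n ≥ 1 and let χ: 𝔽₅[t₁,…,t_n] → 𝔽₅[t₁,…,t_n] be the ring homomorphism with χ(tᵢ)=tᵢ+tᵢ⁵. For 1 ≤ m ≤ n, the homogeneous component of polynomial degree m+4 of χ(e_m) equals (m+4)e_{m+4} − e₁e_{m+3} + (e₁²−2e₂)e_{m+2} + (−e₁³−2e₁e₂+2e₃)e_{m+1} + (e₁⁴+e₁²e₂+2e₂²−e₁e₃+e₄)e_m, where e_k is the k-th elementary symmetric polynomial (e_k := 0 for k > n) and integer coefficients are reduced mod 5. -/

import Mathlib

/-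
Expanding `χ(e_m) = ∑_{|S| = m} ∏_{j ∈ S} (X_j + X_j^5)`, a term taking `X_j^5` from `r` of the
factors has degree `m + 4r`, so the degree `m + 4` part is `H(5, m)`, where
`H(k, m) = ∑_{|S| = m} ∑_{i ∈ S} X_i^k ∏_{j ∈ S \ i} X_j` (`hookSum`).
Sorting the terms of `p_k e_m` by whether the index of the power sum lies in the chosen set gives
`p_k e_m = H(k, m + 1) + H(k + 1, m)`, and `H(1, m) = m e_m`. Telescoping from `H(5, m)` down to
`H(1, m + 4)` expresses the component through `p_1, …, p_4` and `e_m, …, e_{m+4}`; Newton's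
identities, reduced mod 5, turn the `p_k` into the stated polynomials in `e_1, …, e_4`.
-/

open MvPolynomial Finset

namespace Finset

variable {α M : Type*} [DecidableEq α] [AddCommMonoid M]

theorem sum_powersetCard_sum_sdiff (s : Finset α) (m : ℕ) (f : α → Finset α → M) :
    ∑ t ∈ s.powersetCard m, ∑ i ∈ s \ t, f i t =
      ∑ u ∈ s.powersetCard (m + 1), ∑ i ∈ u, f i (u.erase i) := by
  rw [sum_sigma', sum_sigma']
  refine sum_nbij' (fun p => ⟨insert p.2 p.1, p.2⟩) (fun p => ⟨p.1.erase p.2, p.2⟩)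
    ?_ ?_ ?_ ?_ ?_
  · rintro ⟨t, i⟩ h
    simp only [mem_sigma, mem_powersetCard, mem_sdiff] at h ⊢
    obtain ⟨⟨hts, rfl⟩, his, hit⟩ := h
    exact ⟨⟨insert_subset his hts, card_insert_of_notMem hit⟩, mem_insert_self i t⟩
  · rintro ⟨u, i⟩ h
    simp only [mem_sigma, mem_powersetCard, mem_sdiff] at h ⊢
    obtain ⟨⟨hus, hcard⟩, hiu⟩ := h
    exact ⟨⟨(erase_subset i u).trans hus, by rw [card_erase_of_mem hiu, hcard]; rfl⟩,
      hus hiu, notMem_erase i u⟩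
  · rintro ⟨t, i⟩ h
    simp only [mem_sigma, mem_sdiff] at h
    simp [erase_insert h.2.2]
  · rintro ⟨u, i⟩ h
    simp only [mem_sigma] at h
    simp [insert_erase h.2]
  · rintro ⟨t, i⟩ h
    simp only [mem_sigma, mem_sdiff] at h
    simp [erase_insert h.2.2]

end Finset

namespace MvPolynomial

section CommSemiring

variable {σ : Type*} {R : Type*} [CommSemiring R]

theorem isHomogeneous_prod_X_pow_mul_prod_X (q : ℕ) (t u : Finset σ) :
    ((∏ j ∈ t, X j ^ q) * ∏ j ∈ u, (X j : MvPolynomial σ R)).IsHomogeneous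
      (t.card * q + u.card) := by
  have ht := IsHomogeneous.prod t _ (fun _ => q) fun j _ => by
    simpa using (isHomogeneous_X R j).pow q
  have hu := IsHomogeneous.prod u _ (fun _ => 1) fun j _ => isHomogeneous_X R j
  simp only [sum_const, smul_eq_mul, mul_one] at ht hu
  exact ht.mul hu

variable (σ R) [Fintype σ] [DecidableEq σ]

/-- For `k ≥ 2` this is the monomial symmetric polynomial `m_(k, 1^(m-1))`. -/
noncomputable def hookSum (k m : ℕ) : MvPolynomial σ R :=
  ∑ s ∈ univ.powersetCard m, ∑ i ∈ s, X i ^ k * ∏ j ∈ s.erase i, X j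

theorem hookSum_one (m : ℕ) : hookSum σ R 1 m = m * esymm σ R m := by
  rw [hookSum, esymm, mul_sum]
  refine sum_congr rfl fun s hs => ?_
  rw [sum_congr rfl fun i hi => by rw [pow_one, mul_prod_erase s _ hi], sum_const,
    (mem_powersetCard.mp hs).2, nsmul_eq_mul]

theorem psum_mul_esymm (k m : ℕ) :
    psum σ R k * esymm σ R m = hookSum σ R k (m + 1) + hookSum σ R (k + 1) m := by
  rw [hookSum, hookSum, ← sum_powersetCard_sum_sdiff univ m (fun i t => X i ^ k * ∏ j ∈ t, X j),
    ← sum_add_distrib, psum, esymm, mul_sum]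
  refine sum_congr rfl fun t _ => ?_
  rw [← sum_sdiff (subset_univ t), add_mul, sum_mul, sum_mul]
  congr 1
  refine sum_congr rfl fun i hi => ?_
  rw [← mul_prod_erase t _ hi, pow_succ, mul_assoc]

theorem homogeneousComponent_aeval_esymm {k : ℕ} (hk : 0 < k) (m : ℕ) :
    homogeneousComponent (m + k) (aeval (fun i => X i + X i ^ (k + 1)) (esymm σ R m)) =
      hookSum σ R (k + 1) m := by
  rw [esymm, map_sum, map_sum, hookSum]
  refine sum_congr rfl fun s hs => ?_
  rw [map_prod, prod_congr rfl fun j _ => by rw [aeval_X, add_comm], prod_add, map_sum]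
  have hcomp : ∀ t ∈ s.powerset,
      homogeneousComponent (m + k) ((∏ j ∈ t, X j ^ (k + 1)) * ∏ j ∈ s \ t, X j) =
        if #t = 1 then (∏ j ∈ t, X j ^ (k + 1)) * ∏ j ∈ s \ t, (X j : MvPolynomial σ R)
        else 0 := by
    intro t ht
    rw [homogeneousComponent_of_mem
      ((mem_homogeneousSubmodule _ _).mpr (isHomogeneous_prod_X_pow_mul_prod_X _ _ _))]
    refine if_congr ?_ rfl rfl
    rw [← (mem_powersetCard.mp hs).2, ← card_sdiff_add_card_eq_card (mem_powerset.mp ht),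
      mul_add_one, show #t * k + #t + #(s \ t) = #(s \ t) + #t + #t * k by ring,
      Nat.add_left_cancel_iff, eq_comm (a := k), Nat.mul_eq_right hk.ne']
  rw [sum_congr rfl hcomp, ← sum_filter, ← powersetCard_eq_filter, powersetCard_one, sum_map]
  refine sum_congr rfl fun i _ => ?_
  simp [sdiff_singleton_eq_erase]

end CommSemiring

section CommRing

variable (σ : Type*) [Fintype σ] (R : Type*) [CommRing R]

theorem mul_esymm_eq_sum_range (k : ℕ) :
    k * esymm σ R k =
      (-1) ^ (k + 1) * ∑ i ∈ range k, (-1) ^ i * esymm σ R i * psum σ R (k - i) := by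
  rw [mul_esymm_eq_sum, sum_filter, Nat.sum_antidiagonal_eq_sum_range_succ_mk, sum_range_succ,
    if_neg (lt_irrefl k), add_zero]
  congr 1
  exact sum_congr rfl fun i hi => if_pos (mem_range.mp hi)

theorem psum_one_eq_esymm_one : psum σ R 1 = esymm σ R 1 :=
  (psum_one σ R).trans (esymm_one σ R).symm

theorem psum_two_eq : psum σ R 2 = esymm σ R 1 ^ 2 - 2 * esymm σ R 2 := by
  have h := mul_esymm_eq_sum_range σ R 2
  simp only [sum_range_succ, sum_range_zero, esymm_zero] at h
  linear_combination h + esymm σ R 1 * psum_one_eq_esymm_one σ R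

theorem psum_three_eq :
    psum σ R 3 = esymm σ R 1 ^ 3 - 3 * esymm σ R 1 * esymm σ R 2 + 3 * esymm σ R 3 := by
  have h := mul_esymm_eq_sum_range σ R 3
  simp only [sum_range_succ, sum_range_zero, esymm_zero] at h
  linear_combination -h + esymm σ R 1 * psum_two_eq σ R - esymm σ R 2 * psum_one_eq_esymm_one σ R

theorem psum_four_eq :
    psum σ R 4 = esymm σ R 1 ^ 4 - 4 * esymm σ R 1 ^ 2 * esymm σ R 2 + 2 * esymm σ R 2 ^ 2
      + 4 * esymm σ R 1 * esymm σ R 3 - 4 * esymm σ R 4 := by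
  have h := mul_esymm_eq_sum_range σ R 4
  simp only [sum_range_succ, sum_range_zero, esymm_zero] at h
  linear_combination h + esymm σ R 1 * psum_three_eq σ R - esymm σ R 2 * psum_two_eq σ R
    + esymm σ R 3 * psum_one_eq_esymm_one σ R

end CommRing

end MvPolynomial

theorem stmt_6_general (n : ℕ) (m : ℕ) :
    let e : ℕ → MvPolynomial (Fin n) (ZMod 5) := esymm (Fin n) (ZMod 5)
    homogeneousComponent (m + 4)
      (aeval (fun i => X i + (X i) ^ 5) (e m)) =
    C ((m + 4 : ℕ) : ZMod 5) * e (m + 4)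
      - e 1 * e (m + 3)
      + ((e 1) ^ 2 - 2 * e 2) * e (m + 2)
      + (-(e 1) ^ 3 - 2 * e 1 * e 2 + 2 * e 3) * e (m + 1)
      + ((e 1) ^ 4 + (e 1) ^ 2 * e 2 + 2 * (e 2) ^ 2 - e 1 * e 3 + e 4) * e m := by
  intro e
  have five_eq_zero : (5 : MvPolynomial (Fin n) (ZMod 5)) = 0 := by
    exact_mod_cast CharP.cast_eq_zero (MvPolynomial (Fin n) (ZMod 5)) 5
  rw [homogeneousComponent_aeval_esymm _ _ (k := 4) (by norm_num), map_natCast]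
  have h4 := psum_mul_esymm (Fin n) (ZMod 5) 4 m
  have h3 := psum_mul_esymm (Fin n) (ZMod 5) 3 (m + 1)
  have h2 := psum_mul_esymm (Fin n) (ZMod 5) 2 (m + 2)
  have h1 := psum_mul_esymm (Fin n) (ZMod 5) 1 (m + 3)
  have h0 := hookSum_one (Fin n) (ZMod 5) (m + 4)
  linear_combination -h4 + h3 - h2 + h1 + h0 + e m * psum_four_eq (Fin n) (ZMod 5)
    - e (m + 1) * psum_three_eq (Fin n) (ZMod 5) + e (m + 2) * psum_two_eq (Fin n) (ZMod 5)
    - e (m + 3) * psum_one_eq_esymm_one (Fin n) (ZMod 5)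
    + ((e 1 * e 2 - e 3) * e (m + 1) + (e 1 * e 3 - e 1 ^ 2 * e 2 - e 4) * e m) * five_eq_zero

/-- Mod 5 Wu formula for 𝒫¹c_m (Proposition 5.1 iii)). -/
theorem stmt_6 (n : ℕ) (hn : 1 ≤ n) (m : ℕ) (hm1 : 1 ≤ m) (hmn : m ≤ n) :
    let e : ℕ → MvPolynomial (Fin n) (ZMod 5) := esymm (Fin n) (ZMod 5)
    homogeneousComponent (m + 4)
      (aeval (fun i => X i + (X i) ^ 5) (e m)) =
    C ((m + 4 : ℕ) : ZMod 5) * e (m + 4)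
      - e 1 * e (m + 3)
      + ((e 1) ^ 2 - 2 * e 2) * e (m + 2)
      + (-(e 1) ^ 3 - 2 * e 1 * e 2 + 2 * e 3) * e (m + 1)
      + ((e 1) ^ 4 + (e 1) ^ 2 * e 2 + 2 * (e 2) ^ 2 - e 1 * e 3 + e 4) * e m :=
  stmt_6_general n m
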